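/- arXiv:math/0104034 — 4 statements merged into one kernel-verified Lean document; each statement's English description precedes it below -/
import Mathlib

section
/- Let ρ₁, ρ₂, ε₀, ε₁, ε₂ ∈ ℝ, let ψ₁, ψ₂ : ℝ → ℝ be smooth, and suppose ψ : ℝ² → ℂ is a smooth solution of the system ∂₁²ψ = −i ψ₁′(x) ∂₂ψ + (1/2)(ε₁ + ε₀ψ₁(x) − ψ₂(y)ψ₁″(x) − (1/2)ρ₂ψ₁(x)²)ψ and ∂₂²ψ = −i ψ₂′(y) ∂₁ψ + (1/2)(ε₂ + ε₀ψ₂(y) − ψ₁(x)ψ₂″(y) − (1/2)ρ₁ψ₂(y)²)ψ, with coordinates x, y and ∂₁ = ∂/∂x, ∂₂ = ∂/∂y. Then ψ is a joint eigenfunction: Hψ = ((ε₁+ε₂)/2)·ψ and Fψ = ((ε₁−ε₂)/2)·ψ, where H u = (∂₁ + (i/2)ψ₂′(y))²u + (∂₂ + (i/2)ψ₁′(x))²u + V_H·u, F u = (∂₁ − (i/2)ψ₂′(y))²u − (∂₂ − (i/2)ψ₁′(x))²u + V_F·u, with V_H = (1/4)(2ψ₂ψ₁″ + 2ψ₁ψ₂″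 + ρ₂ψ₁² + ρ₁ψ₂² + (ψ₂′)² + (ψ₁′)² − 2ε₀(ψ₁+ψ₂)) and V_F = (1/4)(2ψ₂ψ₁″ − 2ψ₁ψ₂″ + ρ₂ψ₁² − ρ₁ψ₂² + (ψ₂′)² − (ψ₁′)² − 2ε₀(ψ₁−ψ₂)). -/
open Complex ComplexConjugate

noncomputable section

/-- Partial derivative in the first variable of a two-variable function. -/
def pd1 {E : Type*} [NormedAddCommGroup E] [NormedSpace ℝ E]
    (f : ℝ → ℝ → E) (x y : ℝ) : E := deriv (fun t => f t y) x

/-- Partial derivative in the second variable of a two-variable function. -/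
def pd2 {E : Type*} [NormedAddCommGroup E] [NormedSpace ℝ E]
    (f : ℝ → ℝ → E) (x y : ℝ) : E := deriv (fun t => f x t) y

/-- The pseudo-Hermitian form of signature (2,2) on ℂ⁴:
`⟨a,b⟩ = −a₀·conj(b₃) + a₁·conj(b₂) + a₂·conj(b₁) − a₃·conj(b₀)`. -/
def herm4 (a b : Fin 4 → ℂ) : ℂ :=
  -(a 0 * conj (b 3)) + a 1 * conj (b 2) + a 2 * conj (b 1) - a 3 * conj (b 0)

/-- The wedge product of two vectors of ℂ⁴, as a vector in ℂ⁶, in the explicit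
coordinates `y₀ = (p₀₂ − p₃₁)/2, y₁ = (p₀₂ + p₃₁)/2, y₂ = (p₀₃ + p₁₂)/2,
y₃ = (p₀₃ − p₁₂)/(2i), y₄ = (p₀₁ − p₂₃)/(2i), y₅ = (p₀₁ + p₂₃)/(2i)`,
where `p_{ij} = aᵢbⱼ − aⱼbᵢ`. -/
def wedgeC (a b : Fin 4 → ℂ) : Fin 6 → ℂ :=
  ![((a 0 * b 2 - a 2 * b 0) - (a 3 * b 1 - a 1 * b 3)) / 2,
    ((a 0 * b 2 - a 2 * b 0) + (a 3 * b 1 - a 1 * b 3)) / 2,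
    ((a 0 * b 3 - a 3 * b 0) + (a 1 * b 2 - a 2 * b 1)) / 2,
    ((a 0 * b 3 - a 3 * b 0) - (a 1 * b 2 - a 2 * b 1)) / (2 * Complex.I),
    ((a 0 * b 1 - a 1 * b 0) - (a 2 * b 3 - a 3 * b 2)) / (2 * Complex.I),
    ((a 0 * b 1 - a 1 * b 0) + (a 2 * b 3 - a 3 * b 2)) / (2 * Complex.I)]

/-- The real bilinear form of signature (4,2) on ℝ⁶ (the Lie quadric form). -/
def Q6 (x y : Fin 6 → ℝ) : ℝ :=
  -(x 0 * y 0) + x 1 * y 1 + x 2 * y 2 + x 3 * y 3 + x 4 * y 4 - x 5 * y 5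

/-- The pseudo-Hermitian form of signature (4,2) on ℂ⁶. -/
def herm6 (x y : Fin 6 → ℂ) : ℂ :=
  -(x 0 * conj (y 0)) + x 1 * conj (y 1) + x 2 * conj (y 2) + x 3 * conj (y 3)
    + x 4 * conj (y 4) - x 5 * conj (y 5)

/-- The complex bilinear form on ℂ⁶. -/
def bil6 (x y : Fin 6 → ℂ) : ℂ :=
  -(x 0 * y 0) + x 1 * y 1 + x 2 * y 2 + x 3 * y 3 + x 4 * y 4 - x 5 * y 5

/-- The Euclidean dot product on ℝ³. -/
def dot3 (u v : Fin 3 → ℝ) : ℝ := u 0 * v 0 + u 1 * v 1 + u 2 * v 2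

/-- The Schwarzian derivative `S(h) = h‴/h′ − (3/2)(h″/h′)²`. -/
def schwarzian (h : ℝ → ℝ) (x : ℝ) : ℝ :=
  deriv (deriv (deriv h)) x / deriv h x - (3/2) * (deriv (deriv h) x / deriv h x) ^ 2

/-- `(∂₁ + c)² u`, an abbreviation for `∂₁(∂₁u + c·u) + c·(∂₁u + c·u)`. -/
def msq1 (c u : ℝ → ℝ → ℂ) : ℝ → ℝ → ℂ := fun x y =>
  pd1 (fun x' y' => pd1 u x' y' + c x' y' * u x' y') x y
    + c x y * (pd1 u x y + c x y * u x y)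

/-- `(∂₂ + c)² u`, an abbreviation for `∂₂(∂₂u + c·u) + c·(∂₂u + c·u)`. -/
def msq2 (c u : ℝ → ℝ → ℂ) : ℝ → ℝ → ℂ := fun x y =>
  pd2 (fun x' y' => pd2 u x' y' + c x' y' * u x' y') x y
    + c x y * (pd2 u x y + c x y * u x y)

/-- The real part map `U = −2·Im(ψ ∧ ∂₁ψ)` used to define the first curvature sphere. -/
def Uvec (ψ : ℝ → ℝ → Fin 4 → ℂ) : ℝ → ℝ → Fin 6 → ℝ :=
  fun x y i => -2 * (wedgeC (ψ x y) (pd1 ψ x y) i).im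

/-- The real part map `S = 2·Re(ψ ∧ ∂₂ψ)` used to define the second curvature sphere. -/
def Svec (ψ : ℝ → ℝ → Fin 4 → ℂ) : ℝ → ℝ → Fin 6 → ℝ :=
  fun x y i => 2 * (wedgeC (ψ x y) (pd2 ψ x y) i).re

private lemma pd1_eq_fderiv (f : ℝ → ℝ → ℂ)
    (hf : ContDiff ℝ (⊤ : ℕ∞) (fun z : ℝ × ℝ => f z.1 z.2)) (x y : ℝ) :
    pd1 f x y = fderiv ℝ (fun z : ℝ × ℝ => f z.1 z.2) (x, y) (1, 0) := by
  have h := ((hf.differentiable (by simp) (x, y)).hasFDerivAt).comp_hasDerivAt x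
    ((hasDerivAt_id x).prodMk (hasDerivAt_const x y))
  exact h.deriv

private lemma pd2_eq_fderiv (f : ℝ → ℝ → ℂ)
    (hf : ContDiff ℝ (⊤ : ℕ∞) (fun z : ℝ × ℝ => f z.1 z.2)) (x y : ℝ) :
    pd2 f x y = fderiv ℝ (fun z : ℝ × ℝ => f z.1 z.2) (x, y) (0, 1) := by
  have h := ((hf.differentiable (by simp) (x, y)).hasFDerivAt).comp_hasDerivAt y
    ((hasDerivAt_const y x).prodMk (hasDerivAt_id y))
  exact h.deriv

private lemma slice1_diff (G : ℝ × ℝ → ℂ) (hG : ContDiff ℝ (⊤ : ℕ∞) G) (y : ℝ) :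
    Differentiable ℝ (fun t : ℝ => G (t, y)) :=
  (hG.differentiable (by simp)).comp (differentiable_id.prodMk (differentiable_const y))

private lemma slice2_diff (G : ℝ × ℝ → ℂ) (hG : ContDiff ℝ (⊤ : ℕ∞) G) (x : ℝ) :
    Differentiable ℝ (fun t : ℝ => G (x, t)) :=
  (hG.differentiable (by simp)).comp ((differentiable_const x).prodMk differentiable_id)

/-- a solution of the `c = 0` Lie–Wilczynski system is a joint
eigenfunction of the commuting Schrödinger operators `H` and `F` with magnetic
terms, with eigenvalues `(ε₁+ε₂)/2` and `(ε₁−ε₂)/2`. -/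
theorem statement_14 (ρ₁ ρ₂ ε₀ ε₁ ε₂ : ℝ) (ψ₁ ψ₂ : ℝ → ℝ)
    (hψ₁ : ContDiff ℝ (⊤ : ℕ∞) ψ₁) (hψ₂ : ContDiff ℝ (⊤ : ℕ∞) ψ₂)
    (ψ : ℝ → ℝ → ℂ)
    (hψ : ContDiff ℝ (⊤ : ℕ∞) (fun z : ℝ × ℝ => ψ z.1 z.2))
    (hsys1 : ∀ x y, pd1 (pd1 ψ) x y
        = -(Complex.I * ((deriv ψ₁ x : ℝ) : ℂ)) * pd2 ψ x y
          + (((ε₁ + ε₀ * ψ₁ x - ψ₂ y * deriv (deriv ψ₁) x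
                - ρ₂ * (ψ₁ x) ^ 2 / 2 : ℝ) : ℂ) / 2) * ψ x y)
    (hsys2 : ∀ x y, pd2 (pd2 ψ) x y
        = -(Complex.I * ((deriv ψ₂ y : ℝ) : ℂ)) * pd1 ψ x y
          + (((ε₂ + ε₀ * ψ₂ y - ψ₁ x * deriv (deriv ψ₂) y
                - ρ₁ * (ψ₂ y) ^ 2 / 2 : ℝ) : ℂ) / 2) * ψ x y)
    (VH VF : ℝ → ℝ → ℝ)
    (hVH : ∀ x y, VH x y
        = (2 * ψ₂ y * deriv (deriv ψ₁) x + 2 * ψ₁ x * deriv (deriv ψ₂) y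
            + ρ₂ * (ψ₁ x) ^ 2 + ρ₁ * (ψ₂ y) ^ 2 + (deriv ψ₂ y) ^ 2
            + (deriv ψ₁ x) ^ 2 - 2 * ε₀ * (ψ₁ x + ψ₂ y)) / 4)
    (hVF : ∀ x y, VF x y
        = (2 * ψ₂ y * deriv (deriv ψ₁) x - 2 * ψ₁ x * deriv (deriv ψ₂) y
            + ρ₂ * (ψ₁ x) ^ 2 - ρ₁ * (ψ₂ y) ^ 2 + (deriv ψ₂ y) ^ 2
            - (deriv ψ₁ x) ^ 2 - 2 * ε₀ * (ψ₁ x - ψ₂ y)) / 4)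
    (H F : (ℝ → ℝ → ℂ) → ℝ → ℝ → ℂ)
    (hH : ∀ u x y, H u x y
        = msq1 (fun _ y' => Complex.I / 2 * ((deriv ψ₂ y' : ℝ) : ℂ)) u x y
          + msq2 (fun x' _ => Complex.I / 2 * ((deriv ψ₁ x' : ℝ) : ℂ)) u x y
          + (VH x y : ℂ) * u x y)
    (hF : ∀ u x y, F u x y
        = msq1 (fun _ y' => -(Complex.I / 2) * ((deriv ψ₂ y' : ℝ) : ℂ)) u x y
          - msq2 (fun x' _ => -(Complex.I / 2) * ((deriv ψ₁ x' : ℝ) : ℂ)) u x y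
          + (VF x y : ℂ) * u x y) :
    (∀ x y, H ψ x y = (((ε₁ + ε₂) / 2 : ℝ) : ℂ) * ψ x y) ∧
    (∀ x y, F ψ x y = (((ε₁ - ε₂) / 2 : ℝ) : ℂ) * ψ x y) := by
  have hG1 : ContDiff ℝ (⊤ : ℕ∞) (fun z : ℝ × ℝ =>
      fderiv ℝ (fun z : ℝ × ℝ => ψ z.1 z.2) z (1, 0)) :=
    (hψ.fderiv_right (by simp)).clm_apply contDiff_const
  have hG2 : ContDiff ℝ (⊤ : ℕ∞) (fun z : ℝ × ℝ =>
      fderiv ℝ (fun z : ℝ × ℝ => ψ z.1 z.2) z (0, 1)) :=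
    (hψ.fderiv_right (by simp)).clm_apply contDiff_const
  have hψ1 : ∀ y, Differentiable ℝ (fun t : ℝ => ψ t y) := fun y =>
    slice1_diff _ hψ y
  have hψ2 : ∀ x, Differentiable ℝ (fun t : ℝ => ψ x t) := fun x =>
    slice2_diff _ hψ x
  have hp1 : ∀ y, Differentiable ℝ (fun t : ℝ => pd1 ψ t y) := by
    intro y
    have : (fun t : ℝ => pd1 ψ t y)
        = fun t : ℝ => fderiv ℝ (fun z : ℝ × ℝ => ψ z.1 z.2) (t, y) (1, 0) := by
      funext t; exact pd1_eq_fderiv ψ hψ t y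
    rw [this]; exact slice1_diff _ hG1 y
  have hp2 : ∀ x, Differentiable ℝ (fun t : ℝ => pd2 ψ x t) := by
    intro x
    have : (fun t : ℝ => pd2 ψ x t)
        = fun t : ℝ => fderiv ℝ (fun z : ℝ × ℝ => ψ z.1 z.2) (x, t) (0, 1) := by
      funext t; exact pd2_eq_fderiv ψ hψ x t
    rw [this]; exact slice2_diff _ hG2 x
  have M1 : ∀ (k : ℂ) (x y : ℝ),
      msq1 (fun _ y' => k * ((deriv ψ₂ y' : ℝ) : ℂ)) ψ x y
        = pd1 (pd1 ψ) x y + 2 * (k * ((deriv ψ₂ y : ℝ) : ℂ)) * pd1 ψ x y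
          + (k * ((deriv ψ₂ y : ℝ) : ℂ)) ^ 2 * ψ x y := by
    intro k x y
    set C : ℂ := k * ((deriv ψ₂ y : ℝ) : ℂ) with hC
    have hd : HasDerivAt (fun t : ℝ => pd1 ψ t y + C * ψ t y)
        (deriv (fun t : ℝ => pd1 ψ t y) x + C * deriv (fun t : ℝ => ψ t y) x)
        x := (((hp1 y) x).hasDerivAt).add (((hψ1 y) x).hasDerivAt.const_mul C)
    have : pd1 (fun x' y' => pd1 ψ x' y' + C * ψ x' y') x y
        = deriv (fun t : ℝ => pd1 ψ t y) x + C * deriv (fun t : ℝ => ψ t y) x :=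
      hd.deriv
    simp only [msq1, hC, pd1] at this ⊢
    rw [this]
    ring
  have M2 : ∀ (k : ℂ) (x y : ℝ),
      msq2 (fun x' _ => k * ((deriv ψ₁ x' : ℝ) : ℂ)) ψ x y
        = pd2 (pd2 ψ) x y + 2 * (k * ((deriv ψ₁ x : ℝ) : ℂ)) * pd2 ψ x y
          + (k * ((deriv ψ₁ x : ℝ) : ℂ)) ^ 2 * ψ x y := by
    intro k x y
    set C : ℂ := k * ((deriv ψ₁ x : ℝ) : ℂ) with hC
    have hd : HasDerivAt (fun t : ℝ => pd2 ψ x t + C * ψ x t)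
        (deriv (fun t : ℝ => pd2 ψ x t) y + C * deriv (fun t : ℝ => ψ x t) y)
        y := (((hp2 x) y).hasDerivAt).add (((hψ2 x) y).hasDerivAt.const_mul C)
    have : pd2 (fun x' y' => pd2 ψ x' y' + C * ψ x' y') x y
        = deriv (fun t : ℝ => pd2 ψ x t) y + C * deriv (fun t : ℝ => ψ x t) y :=
      hd.deriv
    simp only [msq2, hC, pd2] at this ⊢
    rw [this]
    ring
  constructor
  · intro x y
    rw [hH ψ x y, M1, M2, hsys1 x y, hsys2 x y, hVH x y]
    push_cast
    linear_combination ((((deriv ψ₂ y : ℝ) : ℂ)) ^ 2 + (((deriv ψ₁ x : ℝ) : ℂ)) ^ 2)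
      / 4 * ψ x y * Complex.I_sq
  · intro x y
    rw [hF ψ x y, M1, M2, hsys1 x y, hsys2 x y, hVF x y]
    push_cast
    linear_combination ((((deriv ψ₂ y : ℝ) : ℂ)) ^ 2 - (((deriv ψ₁ x : ℝ) : ℂ)) ^ 2)
      / 4 * ψ x y * Complex.I_sq
end
end

section
/- Let f₁, f₂ : ℝ → ℝ be smooth, let ε₀, ε₁, ε₂ ∈ ℝ, and let Ω ⊆ ℝ² be the open set of points (R¹,R²) with R² > R¹, f₁(R¹) > 0 and f₂(R²) > 0. Define on Ω: p = (1/(R²−R¹))·√(f₂(R²)/f₁(R¹)), q = (1/(R¹−R²))·√(f₁(R¹)/f₂(R²)), V = ∂₁(∂₁q/q) + (1/2)(∂₁q/q)² − (ε₀ + ε₁R¹ + ε₂(R¹)²)/f₁(R¹), W = ∂₂(∂₂p/p) + (1/2)(∂₂p/p)² + (ε₀ + ε₁R² + ε₂(R²)²)/f₂(R²). Then p, q, V, W satisfy the compatibility conditions on Ω: ∂₂³p − 2W ∂₂p − p ∂₂W + ∂₁³q − 2V ∂₁q − q ∂₁V = 0, ∂₁W = 2q ∂₂p + p ∂₂q,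 and ∂₂V = 2p ∂₁q + q ∂₁p. -/
open Complex ComplexConjugate

noncomputable section

noncomputable section LieHelpers

namespace LieAux

def mm (f : ℝ → ℝ) (c t : ℝ) : ℝ := deriv f t / (2 * f t) - 1 / (t - c)

def mm1 (f : ℝ → ℝ) (c t : ℝ) : ℝ :=
  deriv (deriv f) t / (2 * f t) - (deriv f t) ^ 2 / (2 * (f t) ^ 2) + 1 / (t - c) ^ 2

def mm2 (f : ℝ → ℝ) (c t : ℝ) : ℝ :=
  deriv (deriv (deriv f)) t / (2 * f t) - 3 * deriv f t * deriv (deriv f) t / (2 * (f t) ^ 2)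
    + (deriv f t) ^ 3 / (f t) ^ 3 - 2 / (t - c) ^ 3

def SFn (f : ℝ → ℝ) (c t : ℝ) : ℝ := Real.sqrt (f t) / (t - c)

def Wfn (f : ℝ → ℝ) (e0 e1 e2 s c t : ℝ) : ℝ :=
  mm1 f c t + (mm f c t) ^ 2 / 2 + s * ((e0 + e1 * t + e2 * t ^ 2) / f t)

theorem smd {f : ℝ → ℝ} (hf : ContDiff ℝ (⊤:ℕ∞) f) : ContDiff ℝ (⊤:ℕ∞) (deriv f) :=
  (contDiff_infty_iff_deriv.mp hf).2

theorem hda {f : ℝ → ℝ} (hf : ContDiff ℝ (⊤:ℕ∞) f) (t : ℝ) : HasDerivAt f (deriv f t) t :=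
  (hf.differentiable (by simp) t).hasDerivAt

theorem evn {f : ℝ → ℝ} (hf : ContDiff ℝ (⊤:ℕ∞) f) {c t : ℝ} (h0 : 0 < f t) (hc : t ≠ c) :
    ∀ᶠ u in nhds t, 0 < f u ∧ u ≠ c :=
  ((hf.continuous.continuousAt).eventually (eventually_gt_nhds h0)).and (eventually_ne_nhds hc)

theorem hds {f : ℝ → ℝ} (hf : ContDiff ℝ (⊤:ℕ∞) f) {t : ℝ} (h0 : 0 < f t) :
    HasDerivAt (fun u => Real.sqrt (f u)) (deriv f t / (2 * Real.sqrt (f t))) t := by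
  have h := (Real.hasDerivAt_sqrt h0.ne').comp t (hda hf t)
  refine h.congr_deriv ?_
  ring

theorem hdSF {f : ℝ → ℝ} (hf : ContDiff ℝ (⊤:ℕ∞) f) {c t : ℝ} (h0 : 0 < f t) (hc : t ≠ c) :
    HasDerivAt (SFn f c) (SFn f c t * mm f c t) t := by
  have h1 : t - c ≠ 0 := sub_ne_zero.mpr hc
  have h := (hds hf h0).div ((hasDerivAt_id t).sub_const c) h1
  have hgoal : HasDerivAt (fun u => Real.sqrt (f u) / (u - c))
      (SFn f c t * mm f c t) t := by
    refine h.congr_deriv ?_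
    obtain ⟨S, hS, hSa⟩ : ∃ S, 0 < S ∧ f t = S ^ 2 :=
      ⟨_, Real.sqrt_pos.mpr h0, (Real.sq_sqrt h0.le).symm⟩
    simp only [SFn, mm, hSa, Real.sqrt_sq hS.le, id_eq]
    field_simp
  exact hgoal

theorem hdmm {f : ℝ → ℝ} (hf : ContDiff ℝ (⊤:ℕ∞) f) {c t : ℝ} (h0 : 0 < f t) (hc : t ≠ c) :
    HasDerivAt (fun u => mm f c u) (mm1 f c t) t := by
  have h1 : t - c ≠ 0 := sub_ne_zero.mpr hc
  simp only [mm]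
  have ha : HasDerivAt (fun u => deriv f u / (2 * f u))
      ((deriv (deriv f) t * (2 * f t) - deriv f t * (2 * deriv f t)) / (2 * f t) ^ 2) t :=
    (hda (smd hf) t).div ((hda hf t).const_mul 2) (by positivity)
  have hb : HasDerivAt (fun u => 1 / (u - c)) (-(1 / (t - c) ^ 2)) t := by
    simp only [one_div]
    have := ((hasDerivAt_id t).sub_const c).inv h1
    refine this.congr_deriv ?_
    simp only [id_eq]
    field_simp
  have h := ha.sub hb
  refine h.congr_deriv ?_
  simp only [mm1]
  field_simp
  ring

theorem hdmm1 {f : ℝ → ℝ} (hf : ContDiff ℝ (⊤:ℕ∞) f) {c t : ℝ} (h0 : 0 < f t) (hc : t ≠ c) :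
    HasDerivAt (fun u => mm1 f c u) (mm2 f c t) t := by
  have h1 : t - c ≠ 0 := sub_ne_zero.mpr hc
  simp only [mm1]
  have ha : HasDerivAt (fun u => deriv (deriv f) u / (2 * f u))
      ((deriv (deriv (deriv f)) t * (2 * f t) - deriv (deriv f) t * (2 * deriv f t))
        / (2 * f t) ^ 2) t :=
    (hda (smd (smd hf)) t).div ((hda hf t).const_mul 2) (by positivity)
  have hb : HasDerivAt (fun u => (deriv f u) ^ 2 / (2 * (f u) ^ 2))
      (((2 : ℕ) * deriv f t ^ (2 - 1) * deriv (deriv f) t * (2 * f t ^ 2)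
        - deriv f t ^ 2 * (2 * ((2 : ℕ) * f t ^ (2 - 1) * deriv f t))) / (2 * f t ^ 2) ^ 2) t :=
    ((hda (smd hf) t).pow 2).div (((hda hf t).pow 2).const_mul 2) (by positivity)
  have hcc : HasDerivAt (fun u => 1 / (u - c) ^ 2)
      (-((2 : ℕ) * (t - c) ^ (2 - 1) * 1) / ((t - c) ^ 2) ^ 2) t := by
    simp only [one_div]
    exact (((hasDerivAt_id t).sub_const c).pow 2).inv (pow_ne_zero 2 h1)
  have h := (ha.sub hb).add hcc
  refine h.congr_deriv ?_
  simp only [mm2]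
  have h2 : f t ≠ 0 := h0.ne'
  field_simp
  ring

theorem hdmmc {f : ℝ → ℝ} {c t : ℝ} (hc : t ≠ c) :
    HasDerivAt (fun c' => mm f c' t) (-(1 / (t - c) ^ 2)) c := by
  have h1 : t - c ≠ 0 := sub_ne_zero.mpr hc
  simp only [mm]
  have hb : HasDerivAt (fun c' => 1 / (t - c')) (1 / (t - c) ^ 2) c := by
    simp only [one_div]
    have := (HasDerivAt.const_sub t (hasDerivAt_id c)).inv h1
    refine this.congr_deriv ?_
    simp only [id_eq]
    field_simp
  have h := (hasDerivAt_const c (deriv f t / (2 * f t))).sub hb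
  refine h.congr_deriv ?_
  ring

theorem hdmm1c {f : ℝ → ℝ} {c t : ℝ} (hc : t ≠ c) :
    HasDerivAt (fun c' => mm1 f c' t) (2 / (t - c) ^ 3) c := by
  have h1 : t - c ≠ 0 := sub_ne_zero.mpr hc
  simp only [mm1]
  have hb : HasDerivAt (fun c' => 1 / (t - c') ^ 2) (2 / (t - c) ^ 3) c := by
    simp only [one_div]
    have := ((HasDerivAt.const_sub t (hasDerivAt_id c)).pow 2).inv (pow_ne_zero 2 h1)
    refine this.congr_deriv ?_
    simp only [id_eq, Pi.pow_apply]
    field_simp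
    ring
  have h := ((hasDerivAt_const c (deriv (deriv f) t / (2 * f t))).sub
      (hasDerivAt_const c (deriv f t ^ 2 / (2 * f t ^ 2)))).add hb
  refine h.congr_deriv ?_
  ring

theorem hdE {f : ℝ → ℝ} (hf : ContDiff ℝ (⊤:ℕ∞) f) (e0 e1 e2 : ℝ) {t : ℝ} (h0 : 0 < f t) :
    HasDerivAt (fun u => (e0 + e1 * u + e2 * u ^ 2) / f u)
      (((e1 + 2 * e2 * t) * f t - (e0 + e1 * t + e2 * t ^ 2) * deriv f t) / f t ^ 2) t := by
  have hp : HasDerivAt (fun u => e0 + e1 * u + e2 * u ^ 2) (e1 + 2 * e2 * t) t := by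
    have := ((hasDerivAt_const t e0).add ((hasDerivAt_id t).const_mul e1)).add
      (((hasDerivAt_id t).pow 2).const_mul e2)
    refine this.congr_deriv ?_
    push_cast
    simp only [id]
    ring
  exact hp.div (hda hf t) h0.ne'

theorem hdW_t {f : ℝ → ℝ} (hf : ContDiff ℝ (⊤:ℕ∞) f) (e0 e1 e2 s : ℝ) {c t : ℝ}
    (h0 : 0 < f t) (hc : t ≠ c) :
    HasDerivAt (fun u => Wfn f e0 e1 e2 s c u)
      (mm2 f c t + mm f c t * mm1 f c t
        + s * (((e1 + 2 * e2 * t) * f t - (e0 + e1 * t + e2 * t ^ 2) * deriv f t) / f t ^ 2))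
      t := by
  simp only [Wfn]
  have h := ((hdmm1 hf h0 hc).add (((hdmm hf h0 hc).pow 2).div_const 2)).add
    ((hdE hf e0 e1 e2 h0).const_mul s)
  refine h.congr_deriv ?_
  push_cast
  ring

theorem hdW_c (f : ℝ → ℝ) (e0 e1 e2 s : ℝ) {c t : ℝ} (hc : t ≠ c) :
    HasDerivAt (fun c' => Wfn f e0 e1 e2 s c' t)
      (2 / (t - c) ^ 3 + mm f c t * (-(1 / (t - c) ^ 2))) c := by
  simp only [Wfn]
  have h := ((hdmm1c (f := f) hc).add (((hdmmc (f := f) hc).pow 2).div_const 2)).add_const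
    (s * ((e0 + e1 * t + e2 * t ^ 2) / f t))
  refine h.congr_deriv ?_
  push_cast
  ring

theorem dSF {f : ℝ → ℝ} (hf : ContDiff ℝ (⊤:ℕ∞) f) {c t : ℝ} (h0 : 0 < f t) (hc : t ≠ c) :
    deriv (SFn f c) t = SFn f c t * mm f c t := (hdSF hf h0 hc).deriv

theorem dSF2 {f : ℝ → ℝ} (hf : ContDiff ℝ (⊤:ℕ∞) f) {c t : ℝ} (h0 : 0 < f t) (hc : t ≠ c) :
    deriv (deriv (SFn f c)) t = SFn f c t * ((mm f c t) ^ 2 + mm1 f c t) := by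
  have hev : deriv (SFn f c) =ᶠ[nhds t] fun u => SFn f c u * mm f c u :=
    (evn hf h0 hc).mono fun u hu => dSF hf hu.1 hu.2
  rw [hev.deriv_eq]
  have h := (hdSF hf h0 hc).mul (hdmm hf h0 hc)
  exact h.deriv.trans (by ring)

theorem dSF3 {f : ℝ → ℝ} (hf : ContDiff ℝ (⊤:ℕ∞) f) {c t : ℝ} (h0 : 0 < f t) (hc : t ≠ c) :
    deriv (deriv (deriv (SFn f c))) t
      = SFn f c t * ((mm f c t) ^ 3 + 3 * mm f c t * mm1 f c t + mm2 f c t) := by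
  have hev : deriv (deriv (SFn f c)) =ᶠ[nhds t]
      fun u => SFn f c u * ((mm f c u) ^ 2 + mm1 f c u) :=
    (evn hf h0 hc).mono fun u hu => dSF2 hf hu.1 hu.2
  rw [hev.deriv_eq]
  have h := (hdSF hf h0 hc).mul
    ((((hdmm hf h0 hc).pow 2)).add (hdmm1 hf h0 hc))
  exact h.deriv.trans (by simp only [Pi.add_apply, Pi.pow_apply]; push_cast; ring)

end LieAux

end LieHelpers


set_option maxHeartbeats 4000000 in
open LieAux in
/-- the potentials of the case `c = 1` of Lie-applicable surfaces
(both families of curvature lines in linear complexes) satisfy the compatibility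
conditions on the open set `{R² > R¹, f₁(R¹) > 0, f₂(R²) > 0}`. -/
theorem statement_15 (f₁ f₂ : ℝ → ℝ) (ε₀ ε₁ ε₂ : ℝ)
    (hf₁ : ContDiff ℝ (⊤ : ℕ∞) f₁) (hf₂ : ContDiff ℝ (⊤ : ℕ∞) f₂)
    (p q V W : ℝ → ℝ → ℝ)
    (hp : ∀ x y, p x y = (1 / (y - x)) * Real.sqrt (f₂ y / f₁ x))
    (hq : ∀ x y, q x y = (1 / (x - y)) * Real.sqrt (f₁ x / f₂ y))
    (hV : ∀ x y, V x y
        = pd1 (fun u v => pd1 q u v / q u v) x y + (pd1 q x y / q x y) ^ 2 / 2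
          - (ε₀ + ε₁ * x + ε₂ * x ^ 2) / f₁ x)
    (hW : ∀ x y, W x y
        = pd2 (fun u v => pd2 p u v / p u v) x y + (pd2 p x y / p x y) ^ 2 / 2
          + (ε₀ + ε₁ * y + ε₂ * y ^ 2) / f₂ y) :
    ∀ x y, x < y → 0 < f₁ x → 0 < f₂ y →
      (pd2 (pd2 (pd2 p)) x y - 2 * W x y * pd2 p x y - p x y * pd2 W x y
          + pd1 (pd1 (pd1 q)) x y - 2 * V x y * pd1 q x y - q x y * pd1 V x y = 0) ∧
      (pd1 W x y = 2 * q x y * pd2 p x y + p x y * pd2 q x y) ∧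
      (pd2 V x y = 2 * p x y * pd1 q x y + q x y * pd1 p x y) := by
  have hf1 : ContDiff ℝ (⊤:ℕ∞) f₁ := hf₁.of_le (by simp)
  have hf2 : ContDiff ℝ (⊤:ℕ∞) f₂ := hf₂.of_le (by simp)
  -- function identities
  have hpfun : ∀ x', 0 < f₁ x' →
      (fun u => p x' u) = fun u => (Real.sqrt (f₁ x'))⁻¹ * SFn f₂ x' u := by
    intro x' h; funext u
    rw [hp, SFn, Real.sqrt_div' (f₂ u) h.le]
    simp only [one_div, div_eq_mul_inv]
    ring
  have hqfun : ∀ y', 0 < f₂ y' →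
      (fun s => q s y') = fun s => (Real.sqrt (f₂ y'))⁻¹ * SFn f₁ y' s := by
    intro y' h; funext s
    rw [hq, SFn, Real.sqrt_div' (f₁ s) h.le]
    simp only [one_div, div_eq_mul_inv]
    ring
  -- pd2 chains for p
  have hpd2 : ∀ x', 0 < f₁ x' → ∀ t,
      pd2 p x' t = (Real.sqrt (f₁ x'))⁻¹ * deriv (SFn f₂ x') t := by
    intro x' h t
    show deriv (fun u => p x' u) t = _
    rw [hpfun x' h]
    exact deriv_const_mul_field _
  have hpd22 : ∀ x', 0 < f₁ x' → ∀ t,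
      pd2 (pd2 p) x' t = (Real.sqrt (f₁ x'))⁻¹ * deriv (deriv (SFn f₂ x')) t := by
    intro x' h t
    show deriv (fun u => pd2 p x' u) t = _
    have he : (fun u => pd2 p x' u)
        = fun u => (Real.sqrt (f₁ x'))⁻¹ * deriv (SFn f₂ x') u := funext fun u => hpd2 x' h u
    rw [he]
    exact deriv_const_mul_field _
  have hpd23 : ∀ x', 0 < f₁ x' → ∀ t,
      pd2 (pd2 (pd2 p)) x' t
        = (Real.sqrt (f₁ x'))⁻¹ * deriv (deriv (deriv (SFn f₂ x'))) t := by
    intro x' h t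
    show deriv (fun u => pd2 (pd2 p) x' u) t = _
    have he : (fun u => pd2 (pd2 p) x' u)
        = fun u => (Real.sqrt (f₁ x'))⁻¹ * deriv (deriv (SFn f₂ x')) u :=
      funext fun u => hpd22 x' h u
    rw [he]
    exact deriv_const_mul_field _
  -- pd1 chains for q
  have hqd1 : ∀ y', 0 < f₂ y' → ∀ s,
      pd1 q s y' = (Real.sqrt (f₂ y'))⁻¹ * deriv (SFn f₁ y') s := by
    intro y' h s
    show deriv (fun u => q u y') s = _
    rw [hqfun y' h]
    exact deriv_const_mul_field _
  have hqd12 : ∀ y', 0 < f₂ y' → ∀ s,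
      pd1 (pd1 q) s y' = (Real.sqrt (f₂ y'))⁻¹ * deriv (deriv (SFn f₁ y')) s := by
    intro y' h s
    show deriv (fun u => pd1 q u y') s = _
    have he : (fun u => pd1 q u y')
        = fun u => (Real.sqrt (f₂ y'))⁻¹ * deriv (SFn f₁ y') u := funext fun u => hqd1 y' h u
    rw [he]
    exact deriv_const_mul_field _
  have hqd13 : ∀ y', 0 < f₂ y' → ∀ s,
      pd1 (pd1 (pd1 q)) s y'
        = (Real.sqrt (f₂ y'))⁻¹ * deriv (deriv (deriv (SFn f₁ y'))) s := by
    intro y' h s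
    show deriv (fun u => pd1 (pd1 q) u y') s = _
    have he : (fun u => pd1 (pd1 q) u y')
        = fun u => (Real.sqrt (f₂ y'))⁻¹ * deriv (deriv (SFn f₁ y')) u :=
      funext fun u => hqd12 y' h u
    rw [he]
    exact deriv_const_mul_field _
  -- ratios
  have hprat : ∀ x' t, 0 < f₁ x' → 0 < f₂ t → t ≠ x' →
      pd2 p x' t / p x' t = mm f₂ x' t := by
    intro x' t h1 h2 h3
    have e2 : p x' t = (Real.sqrt (f₁ x'))⁻¹ * SFn f₂ x' t := congrFun (hpfun x' h1) t
    rw [hpd2 x' h1 t, dSF hf2 h2 h3, e2,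
      mul_div_mul_left _ _ (inv_ne_zero (Real.sqrt_pos.mpr h1).ne')]
    exact mul_div_cancel_left₀ _
      (div_ne_zero (Real.sqrt_pos.mpr h2).ne' (sub_ne_zero.mpr h3))
  have hqrat : ∀ s y', 0 < f₁ s → 0 < f₂ y' → s ≠ y' →
      pd1 q s y' / q s y' = mm f₁ y' s := by
    intro s y' h1 h2 h3
    have e2 : q s y' = (Real.sqrt (f₂ y'))⁻¹ * SFn f₁ y' s := congrFun (hqfun y' h2) s
    rw [hqd1 y' h2 s, dSF hf1 h1 h3, e2,
      mul_div_mul_left _ _ (inv_ne_zero (Real.sqrt_pos.mpr h2).ne')]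
    exact mul_div_cancel_left₀ _
      (div_ne_zero (Real.sqrt_pos.mpr h1).ne' (sub_ne_zero.mpr h3))
  -- W and V closed forms
  have hWf : ∀ x' t, 0 < f₁ x' → 0 < f₂ t → t ≠ x' →
      W x' t = Wfn f₂ ε₀ ε₁ ε₂ 1 x' t := by
    intro x' t h1 h2 h3
    rw [hW, Wfn]
    have hder : pd2 (fun u v => pd2 p u v / p u v) x' t = mm1 f₂ x' t := by
      show deriv (fun v => pd2 p x' v / p x' v) t = _
      have hev : (fun v => pd2 p x' v / p x' v) =ᶠ[nhds t] fun v => mm f₂ x' v :=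
        (evn hf2 h2 h3).mono fun v hv => hprat x' v h1 hv.1 hv.2
      rw [hev.deriv_eq]
      exact (hdmm hf2 h2 h3).deriv
    rw [hder, hprat x' t h1 h2 h3]
    ring
  have hVf : ∀ s y', 0 < f₁ s → 0 < f₂ y' → s ≠ y' →
      V s y' = Wfn f₁ ε₀ ε₁ ε₂ (-1) y' s := by
    intro s y' h1 h2 h3
    rw [hV, Wfn]
    have hder : pd1 (fun u v => pd1 q u v / q u v) s y' = mm1 f₁ y' s := by
      show deriv (fun u => pd1 q u y' / q u y') s = _
      have hev : (fun u => pd1 q u y' / q u y') =ᶠ[nhds s] fun u => mm f₁ y' u :=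
        (evn hf1 h1 h3).mono fun u hu => hqrat u y' hu.1 h2 hu.2
      rw [hev.deriv_eq]
      exact (hdmm hf1 h1 h3).deriv
    rw [hder, hqrat s y' h1 h2 h3]
    ring
  -- now fix the point
  intro x y hxy ha hb
  have hyx : y ≠ x := ne_of_gt hxy
  have hxyne : x ≠ y := ne_of_lt hxy
  have hu : y - x ≠ 0 := sub_ne_zero.mpr hyx
  have hv : x - y ≠ 0 := sub_ne_zero.mpr hxyne
  have hSA : (0:ℝ) < Real.sqrt (f₁ x) := Real.sqrt_pos.mpr ha
  have hSB : (0:ℝ) < Real.sqrt (f₂ y) := Real.sqrt_pos.mpr hb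
  have hevx : ∀ᶠ s in nhds x, 0 < f₁ s ∧ s ≠ y := evn hf1 ha hxyne
  have hevy : ∀ᶠ t in nhds y, 0 < f₂ t ∧ t ≠ x := evn hf2 hb hyx
  -- derivatives of W and V
  have hWy : pd2 W x y = mm2 f₂ x y + mm f₂ x y * mm1 f₂ x y
      + 1 * (((ε₁ + 2 * ε₂ * y) * f₂ y - (ε₀ + ε₁ * y + ε₂ * y ^ 2) * deriv f₂ y)
        / f₂ y ^ 2) := by
    show deriv (fun t => W x t) y = _
    have hev : (fun t => W x t) =ᶠ[nhds y] fun t => Wfn f₂ ε₀ ε₁ ε₂ 1 x t :=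
      hevy.mono fun t ht => hWf x t ha ht.1 ht.2
    rw [hev.deriv_eq]
    exact (hdW_t hf2 ε₀ ε₁ ε₂ 1 hb hyx).deriv
  have hWx : pd1 W x y = 2 / (y - x) ^ 3 + mm f₂ x y * (-(1 / (y - x) ^ 2)) := by
    show deriv (fun s => W s y) x = _
    have hev : (fun s => W s y) =ᶠ[nhds x] fun s => Wfn f₂ ε₀ ε₁ ε₂ 1 s y :=
      hevx.mono fun s hs => hWf s y hs.1 hb hs.2.symm
    rw [hev.deriv_eq]
    exact (hdW_c f₂ ε₀ ε₁ ε₂ 1 hyx).deriv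
  have hVx : pd1 V x y = mm2 f₁ y x + mm f₁ y x * mm1 f₁ y x
      + (-1) * (((ε₁ + 2 * ε₂ * x) * f₁ x - (ε₀ + ε₁ * x + ε₂ * x ^ 2) * deriv f₁ x)
        / f₁ x ^ 2) := by
    show deriv (fun s => V s y) x = _
    have hev : (fun s => V s y) =ᶠ[nhds x] fun s => Wfn f₁ ε₀ ε₁ ε₂ (-1) y s :=
      hevx.mono fun s hs => hVf s y hs.1 hb hs.2
    rw [hev.deriv_eq]
    exact (hdW_t hf1 ε₀ ε₁ ε₂ (-1) ha hxyne).deriv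
  have hVy : pd2 V x y = 2 / (x - y) ^ 3 + mm f₁ y x * (-(1 / (x - y) ^ 2)) := by
    show deriv (fun t => V x t) y = _
    have hev : (fun t => V x t) =ᶠ[nhds y] fun t => Wfn f₁ ε₀ ε₁ ε₂ (-1) t x :=
      hevy.mono fun t ht => hVf x t ha ht.1 ht.2.symm
    rw [hev.deriv_eq]
    exact (hdW_c f₁ ε₀ ε₁ ε₂ (-1) hxyne).deriv
  -- values at the point
  have hp0 : p x y = (Real.sqrt (f₁ x))⁻¹ * SFn f₂ x y := congrFun (hpfun x ha) y
  have hq0 : q x y = (Real.sqrt (f₂ y))⁻¹ * SFn f₁ y x := congrFun (hqfun y hb) x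
  have hp2 : pd2 p x y = (Real.sqrt (f₁ x))⁻¹ * (SFn f₂ x y * mm f₂ x y) := by
    rw [hpd2 x ha y, dSF hf2 hb hyx]
  have hp23 : pd2 (pd2 (pd2 p)) x y = (Real.sqrt (f₁ x))⁻¹
      * (SFn f₂ x y * ((mm f₂ x y) ^ 3 + 3 * mm f₂ x y * mm1 f₂ x y + mm2 f₂ x y)) := by
    rw [hpd23 x ha y, dSF3 hf2 hb hyx]
  have hq1 : pd1 q x y = (Real.sqrt (f₂ y))⁻¹ * (SFn f₁ y x * mm f₁ y x) := by
    rw [hqd1 y hb x, dSF hf1 ha hxyne]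
  have hq13 : pd1 (pd1 (pd1 q)) x y = (Real.sqrt (f₂ y))⁻¹
      * (SFn f₁ y x * ((mm f₁ y x) ^ 3 + 3 * mm f₁ y x * mm1 f₁ y x + mm2 f₁ y x)) := by
    rw [hqd13 y hb x, dSF3 hf1 ha hxyne]
  have hW0 : W x y = Wfn f₂ ε₀ ε₁ ε₂ 1 x y := hWf x y ha hb hyx
  have hV0 : V x y = Wfn f₁ ε₀ ε₁ ε₂ (-1) y x := hVf x y ha hb hxyne
  -- cross derivatives pd2 q and pd1 p
  have hq2 : pd2 q x y = Real.sqrt (f₁ x)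
      * (-(-1 * Real.sqrt (f₂ y) + (x - y) * (deriv f₂ y / (2 * Real.sqrt (f₂ y))))
        / ((x - y) * Real.sqrt (f₂ y)) ^ 2) := by
    show deriv (fun t => q x t) y = _
    have hfun : (fun t => q x t) = fun t => Real.sqrt (f₁ x)
        * ((x - t) * Real.sqrt (f₂ t))⁻¹ := by
      funext t
      rw [hq, Real.sqrt_div ha.le]
      simp only [one_div, div_eq_mul_inv, mul_inv]
      ring
    rw [hfun]
    have hden : (x - y) * Real.sqrt (f₂ y) ≠ 0 := mul_ne_zero hv hSB.ne'
    exact ((((HasDerivAt.const_sub x (hasDerivAt_id y)).mul (hds hf2 hb)).inv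
      hden).const_mul (Real.sqrt (f₁ x))).deriv
  have hp1 : pd1 p x y = Real.sqrt (f₂ y)
      * (-(-1 * Real.sqrt (f₁ x) + (y - x) * (deriv f₁ x / (2 * Real.sqrt (f₁ x))))
        / ((y - x) * Real.sqrt (f₁ x)) ^ 2) := by
    show deriv (fun s => p s y) x = _
    have hfun : (fun s => p s y) = fun s => Real.sqrt (f₂ y)
        * ((y - s) * Real.sqrt (f₁ s))⁻¹ := by
      funext s
      rw [hp, Real.sqrt_div hb.le]
      simp only [one_div, div_eq_mul_inv, mul_inv]
      ring
    rw [hfun]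
    have hden : (y - x) * Real.sqrt (f₁ x) ≠ 0 := mul_ne_zero hu hSA.ne'
    exact ((((HasDerivAt.const_sub y (hasDerivAt_id x)).mul (hds hf1 ha)).inv
      hden).const_mul (Real.sqrt (f₂ y))).deriv
  -- substitution of sqrt values
  obtain ⟨SA, hSA0, hA⟩ : ∃ S, 0 < S ∧ f₁ x = S ^ 2 :=
    ⟨_, hSA, (Real.sq_sqrt ha.le).symm⟩
  obtain ⟨SB, hSB0, hB⟩ : ∃ S, 0 < S ∧ f₂ y = S ^ 2 :=
    ⟨_, hSB, (Real.sq_sqrt hb.le).symm⟩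
  refine ⟨?_, ?_, ?_⟩
  · rw [hp23, hW0, hp2, hWy, hq13, hV0, hq1, hVx, hp0, hq0]
    simp only [Wfn, mm, mm1, mm2, SFn, hA, hB, Real.sqrt_sq hSA0.le, Real.sqrt_sq hSB0.le]
    field_simp
    ring
  · rw [hWx, hq0, hp2, hp0, hq2]
    simp only [Wfn, mm, mm1, mm2, SFn, hA, hB, Real.sqrt_sq hSA0.le, Real.sqrt_sq hSB0.le]
    field_simp
    ring
  · rw [hVy, hp0, hq1, hq0, hp1]
    simp only [Wfn, mm, mm1, mm2, SFn, hA, hB, Real.sqrt_sq hSA0.le, Real.sqrt_sq hSB0.le]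
    field_simp
    ring
end
end

section
/- Let k ∈ ℝ, k ≠ 0, λ ∈ ℝ, and let ψ₁, ψ₂ : ℝ → ℝ be twice-differentiable solutions of the Hermite equation φ″(t) = (t² − 2λ)·φ(t) whose Wronskian satisfies ψ₁(t)ψ₂′(t) − ψ₂(t)ψ₁′(t) = W for all t, for a nonzero constant W. Define ψ : ℝ² → ℂ⁴ by ψ(x,y) = (e^{ikx}ψ₁(y+k), e^{−ikx}ψ₁(y−k), e^{−ikx}ψ₂(y−k)/(2ikW), e^{ikx}ψ₂(y+k)/(2ikW)). Then, with respect to the pseudo-Hermitian form ⟨a,b⟩ = −a₀·conj(b₃) + a₁·conj(b₂) + a₂·conj(b₁) − a₃·conj(b₀) on ℂ⁴, at every point: ⟨∂_xψ, ∂_yψ⟩ = ⟨∂_yψ, ∂_xψ⟩ = 1, ⟨ψ, ∂_x∂_yψ⟩ = ⟨∂_x∂_yψ, ψ⟩ = −1, all other pseudo-Hermitian products among the four vectors ψ, ∂_xψ, ∂_yψ, ∂_x∂_yψ vanish, and the determinant of the 4×4 matrix with rows ψ, ∂_xψ, ∂_yψ, ∂_x∂_yψ equals −1. -/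
open Complex ComplexConjugate

noncomputable section

/-!
Write `D = 2ikW` and `σ = (1, -1, -1, 1)`. Then `ψ(x, y)` is the coordinatewise product of the
phase vector `φ(x) = (e^{ikx}, e^{-ikx}, e^{-ikx}/D, e^{ikx}/D)` with the real vector
`p(y) = (ψ₁(y+k), ψ₁(y-k), ψ₂(y-k), ψ₂(y+k))`. Differentiating in `x` multiplies by `ikσ`,
differentiating in `y` only touches `p`, so the four vectors are `φ` times `p, ikσp, p', ikσp'`.
As `|e^{ikx}| = 1` and `D` is imaginary, `⟨φa, φb⟩ = ω(a, b̄)/D` with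
`ω(a, b) = (a₀b₃ - a₃b₀) - (a₁b₂ - a₂b₁)`. For `(p, p')` both minors are the Wronskian of
`ψ₁, ψ₂`, at `y + k` and at `y - k`, hence both equal `W`: they cancel in `ω(p, p')` and add up
to `2W` in `ω(p, σp')`, which produces the entries `±1`. The determinant is
`(∏ φ) · det(p, ikσp, p', ikσp') = D⁻² · (-4(ik)²W²) = -1`.
-/

section PartialDerivatives

variable {𝔸 : Type*} [NormedRing 𝔸] [NormedAlgebra ℝ 𝔸]

theorem pd1_mul_const {a : ℝ → 𝔸} {x : ℝ} (ha : DifferentiableAt ℝ a x) (p : ℝ → 𝔸) (y : ℝ) :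
    pd1 (fun x y => a x * p y) x y = deriv a x * p y :=
  (ha.hasDerivAt.mul_const (p y)).deriv

theorem pd2_const_mul (a : ℝ → 𝔸) {p : ℝ → 𝔸} (x : ℝ) {y : ℝ} (hp : DifferentiableAt ℝ p y) :
    pd2 (fun x y => a x * p y) x y = a x * deriv p y :=
  (hp.hasDerivAt.const_mul (a x)).deriv

end PartialDerivatives

def phaseSign : Fin 4 → ℂ := ![1, -1, -1, 1]

def phase (k : ℝ) (D : ℂ) (x : ℝ) : Fin 4 → ℂ :=
  ![exp (I * k * x), exp (-(I * k * x)), exp (-(I * k * x)) / D, exp (I * k * x) / D]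

theorem hasDerivAt_phase (k : ℝ) (D : ℂ) (x : ℝ) :
    HasDerivAt (phase k D) ((I * k) • (phaseSign * phase k D x)) x := by
  have hpos : HasDerivAt (fun t : ℝ => exp (I * k * t)) (I * k * exp (I * k * x)) x := by
    simpa [mul_comm] using ((hasDerivAt_id x).ofReal_comp.const_mul (I * k)).cexp
  have hneg : HasDerivAt (fun t : ℝ => exp (-(I * k * t))) (-(I * k) * exp (-(I * k * x))) x := by
    simpa [mul_comm] using ((hasDerivAt_id x).ofReal_comp.const_mul (I * k)).neg.cexp
  rw [hasDerivAt_pi]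
  intro j
  fin_cases j
  · simpa [phase, phaseSign] using hpos
  · simpa [phase, phaseSign] using hneg
  · simpa [phase, phaseSign, mul_div_assoc, neg_div] using hneg.div_const D
  · simpa [phase, phaseSign, mul_div_assoc] using hpos.div_const D

theorem exp_mul_exp_neg_eq_one (z : ℂ) : exp z * exp (-z) = 1 := by
  rw [← exp_add, add_neg_cancel, exp_zero]

theorem prod_phase (k : ℝ) (D : ℂ) (x : ℝ) : ∏ j, phase k D x j = 1 / D ^ 2 := by
  have hE := exp_mul_exp_neg_eq_one (I * k * x)
  simp only [Fin.prod_univ_four, phase, Matrix.cons_val_zero, Matrix.cons_val_one,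
    Matrix.cons_val]
  linear_combination (1 + exp (I * k * x) * exp (-(I * k * x))) / D ^ 2 * hE

def minor (i j : Fin 4) (a b : Fin 4 → ℂ) : ℂ := a i * b j - a j * b i

def twistedMinor (a b : Fin 4 → ℂ) : ℂ := minor 0 3 a b - minor 1 2 a b

theorem herm4_phase_mul (k : ℝ) {D : ℂ} (hD : conj D = -D) (x : ℝ) (a b : Fin 4 → ℂ) :
    herm4 (phase k D x * a) (phase k D x * b) = twistedMinor a (star b) / D := by
  have hE := exp_mul_exp_neg_eq_one (I * k * x)
  have hconj : conj (exp (I * k * x)) = exp (-(I * k * x)) := by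
    rw [← exp_conj]; simp
  have hconj' : conj (exp (-(I * k * x))) = exp (I * k * x) := by
    rw [← exp_conj]; simp
  simp only [herm4, twistedMinor, minor, phase, Pi.mul_apply, Pi.star_apply, RCLike.star_def,
    map_mul, map_div₀, hD, hconj, hconj', Matrix.cons_val_zero, Matrix.cons_val_one,
    Matrix.cons_val]
  linear_combination
    (a 0 * conj (b 3) - a 1 * conj (b 2) + a 2 * conj (b 1) - a 3 * conj (b 0)) / D * hE

def frameRows (c : ℂ) (p q : Fin 4 → ℂ) : Fin 4 → Fin 4 → ℂ :=
  ![p, c • (phaseSign * p), q, c • (phaseSign * q)]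

theorem frame_phase_mul (k : ℝ) (D : ℂ) {S S' : ℝ → Fin 4 → ℂ} (hS : ∀ y, HasDerivAt S (S' y) y)
    (x y : ℝ) :
    ![phase k D x * S y, pd1 (fun x y => phase k D x * S y) x y,
      pd2 (fun x y => phase k D x * S y) x y, pd1 (pd2 (fun x y => phase k D x * S y)) x y]
      = fun i => phase k D x * frameRows (I * k) (S y) (S' y) i := by
  have hpd2 : pd2 (fun x y => phase k D x * S y) = fun x y => phase k D x * S' y := by
    ext x y : 2
    rw [pd2_const_mul _ _ (hS y).differentiableAt, (hS y).deriv]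
  have hpd1 : ∀ T : ℝ → Fin 4 → ℂ, pd1 (fun x y => phase k D x * T y) x y
      = phase k D x * ((I * k) • (phaseSign * T y)) := by
    intro T
    rw [pd1_mul_const (hasDerivAt_phase k D x).differentiableAt, (hasDerivAt_phase k D x).deriv]
    ext j
    simp only [Pi.mul_apply, Pi.smul_apply, smul_eq_mul]
    ring
  rw [hpd2, hpd1, hpd1]
  ext i : 1
  fin_cases i <;> rfl

theorem twistedMinor_frameRows {p q : Fin 4 → ℂ} (hp : ∀ j, conj (p j) = p j)
    (hq : ∀ j, conj (q j) = q j) {c D W : ℂ} (hc : conj c = -c) (hD : D = 2 * c * W)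
    (hD0 : D ≠ 0) (h03 : minor 0 3 p q = W) (h12 : minor 1 2 p q = W) (i j : Fin 4) :
    twistedMinor (frameRows c p q i) (star (frameRows c p q j)) / D
      = !![(0:ℂ), 0, 0, -1; 0, 0, 1, 0; 0, 1, 0, 0; -1, 0, 0, 0] i j := by
  rw [minor] at h03 h12
  rw [div_eq_iff hD0, hD]
  fin_cases i <;> fin_cases j <;>
    simp only [frameRows, twistedMinor, minor, phaseSign, Pi.star_apply, Pi.smul_apply,
      Pi.mul_apply, smul_eq_mul, star_mul', RCLike.star_def, hp, hq, hc, Fin.zero_eta, Fin.mk_one,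
      Fin.reduceFinMk, Matrix.cons_val_zero, Matrix.cons_val_one, Matrix.cons_val,
      Matrix.of_apply] <;>
    grind

theorem det_frameRows (c : ℂ) (p q : Fin 4 → ℂ) :
    (Matrix.of (frameRows c p q)).det = -4 * c ^ 2 * minor 0 3 p q * minor 1 2 p q := by
  rw [Matrix.det_succ_row_zero, Fin.sum_univ_four]
  simp only [Matrix.det_fin_three, Matrix.submatrix_apply, Matrix.of_apply, frameRows, phaseSign,
    minor, Pi.smul_apply, Pi.mul_apply, smul_eq_mul, Matrix.cons_val, Fin.succAbove, Fin.reduceLT,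
    Fin.reduceCastSucc, Fin.reduceSucc, ↓reduceIte, Fin.coe_ofNat_eq_mod]
  ring

def shiftPair (f g : ℝ → ℝ) (k y : ℝ) : Fin 4 → ℂ :=
  ![(f (y + k) : ℂ), (f (y - k) : ℂ), (g (y - k) : ℂ), (g (y + k) : ℂ)]

theorem conj_shiftPair (f g : ℝ → ℝ) (k y : ℝ) (j : Fin 4) :
    conj (shiftPair f g k y j) = shiftPair f g k y j := by
  fin_cases j <;> simp [shiftPair]

theorem hasDerivAt_shiftPair {f g : ℝ → ℝ} (hf : Differentiable ℝ f) (hg : Differentiable ℝ g)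
    (k y : ℝ) : HasDerivAt (shiftPair f g k) (shiftPair (deriv f) (deriv g) k y) y := by
  have hshift : ∀ {h : ℝ → ℝ}, Differentiable ℝ h → ∀ c : ℝ,
      HasDerivAt (fun t : ℝ => (h (t + c) : ℂ)) (ofReal (deriv h (y + c))) y := fun hh c =>
    ((hh (y + c)).hasDerivAt.comp_add_const y c).ofReal_comp
  rw [hasDerivAt_pi]
  intro j
  fin_cases j
  · exact hshift hf k
  · simpa [shiftPair, sub_eq_add_neg] using hshift hf (-k)
  · simpa [shiftPair, sub_eq_add_neg] using hshift hg (-k)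
  · exact hshift hg k

theorem minor_shiftPair {f g f' g' : ℝ → ℝ} {W : ℝ} (hW : ∀ t, f t * g' t - g t * f' t = W)
    (k y : ℝ) :
    minor 0 3 (shiftPair f g k y) (shiftPair f' g' k y) = W ∧
      minor 1 2 (shiftPair f g k y) (shiftPair f' g' k y) = W := by
  constructor <;>
    simp only [minor, shiftPair, Matrix.cons_val_zero, Matrix.cons_val_one, Matrix.cons_val] <;>
    exact_mod_cast hW _

theorem statement_17_general (k Wr : ℝ) (hk : k ≠ 0) (hWr : Wr ≠ 0)
    (ψ₁ ψ₂ : ℝ → ℝ)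
    (hψ₁ : Differentiable ℝ ψ₁)
    (hψ₂ : Differentiable ℝ ψ₂)
    (hWron : ∀ t, ψ₁ t * deriv ψ₂ t - ψ₂ t * deriv ψ₁ t = Wr)
    (ψ : ℝ → ℝ → Fin 4 → ℂ)
    (hψ : ∀ x y, ψ x y
        = ![Complex.exp (Complex.I * k * x) * ((ψ₁ (y + k) : ℝ) : ℂ),
            Complex.exp (-(Complex.I * k * x)) * ((ψ₁ (y - k) : ℝ) : ℂ),
            Complex.exp (-(Complex.I * k * x)) * ((ψ₂ (y - k) : ℝ) : ℂ)
              / (2 * Complex.I * (k : ℂ) * (Wr : ℂ)),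
            Complex.exp (Complex.I * k * x) * ((ψ₂ (y + k) : ℝ) : ℂ)
              / (2 * Complex.I * (k : ℂ) * (Wr : ℂ))]) :
    (∀ x y, ∀ i j : Fin 4,
      herm4 (![ψ x y, pd1 ψ x y, pd2 ψ x y, pd1 (pd2 ψ) x y] i)
            (![ψ x y, pd1 ψ x y, pd2 ψ x y, pd1 (pd2 ψ) x y] j)
        = !![(0:ℂ), 0, 0, -1; 0, 0, 1, 0; 0, 1, 0, 0; -1, 0, 0, 0] i j) ∧
    (∀ x y, Matrix.det (Matrix.of ![ψ x y, pd1 ψ x y, pd2 ψ x y, pd1 (pd2 ψ) x y]) = -1) := by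
  set D : ℂ := 2 * I * k * Wr with hD
  have hD0 : D ≠ 0 := by simp [D, hk, hWr]
  have hconjD : conj D = -D := by simp [D, map_ofNat]
  obtain rfl : ψ = fun x y => phase k D x * shiftPair ψ₁ ψ₂ k y := by
    ext x y j
    rw [hψ]
    fin_cases j <;> simp [phase, shiftPair, div_mul_eq_mul_div]
  have hframe := frame_phase_mul k D (hasDerivAt_shiftPair hψ₁ hψ₂ k)
  have hminor := minor_shiftPair hWron k
  refine ⟨fun x y i j => ?_, fun x y => ?_⟩
  · rw [hframe, herm4_phase_mul k hconjD]
    exact twistedMinor_frameRows (conj_shiftPair _ _ k y) (conj_shiftPair _ _ k y)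
      (by simp) (by ring) hD0 (hminor y).1 (hminor y).2 i j
  · rw [hframe]
    refine (Matrix.det_mul_row (phase k D x) (Matrix.of (frameRows _ _ _))).trans ?_
    rw [prod_phase, det_frameRows, (hminor y).1, (hminor y).2]
    field_simp
    rw [hD]
    ring

/-- the ℂ⁴-valued function built from two Hermite solutions with
constant nonzero Wronskian is a normalized null tetrad: it realizes the
prescribed pseudo-Hermitian Gram matrix and has determinant −1. -/
theorem statement_17 (k lam Wr : ℝ) (hk : k ≠ 0) (hWr : Wr ≠ 0)
    (ψ₁ ψ₂ : ℝ → ℝ)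
    (hψ₁ : Differentiable ℝ ψ₁) (hψ₁' : Differentiable ℝ (deriv ψ₁))
    (hψ₂ : Differentiable ℝ ψ₂) (hψ₂' : Differentiable ℝ (deriv ψ₂))
    (hherm₁ : ∀ t, deriv (deriv ψ₁) t = (t ^ 2 - 2 * lam) * ψ₁ t)
    (hherm₂ : ∀ t, deriv (deriv ψ₂) t = (t ^ 2 - 2 * lam) * ψ₂ t)
    (hWron : ∀ t, ψ₁ t * deriv ψ₂ t - ψ₂ t * deriv ψ₁ t = Wr)
    (ψ : ℝ → ℝ → Fin 4 → ℂ)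
    (hψ : ∀ x y, ψ x y
        = ![Complex.exp (Complex.I * k * x) * ((ψ₁ (y + k) : ℝ) : ℂ),
            Complex.exp (-(Complex.I * k * x)) * ((ψ₁ (y - k) : ℝ) : ℂ),
            Complex.exp (-(Complex.I * k * x)) * ((ψ₂ (y - k) : ℝ) : ℂ)
              / (2 * Complex.I * (k : ℂ) * (Wr : ℂ)),
            Complex.exp (Complex.I * k * x) * ((ψ₂ (y + k) : ℝ) : ℂ)
              / (2 * Complex.I * (k : ℂ) * (Wr : ℂ))]) :
    (∀ x y, ∀ i j : Fin 4,
      herm4 (![ψ x y, pd1 ψ x y, pd2 ψ x y, pd1 (pd2 ψ) x y] i)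
            (![ψ x y, pd1 ψ x y, pd2 ψ x y, pd1 (pd2 ψ) x y] j)
        = !![(0:ℂ), 0, 0, -1; 0, 0, 1, 0; 0, 1, 0, 0; -1, 0, 0, 0] i j) ∧
    (∀ x y, Matrix.det (Matrix.of ![ψ x y, pd1 ψ x y, pd2 ψ x y, pd1 (pd2 ψ) x y]) = -1) :=
  statement_17_general k Wr hk hWr ψ₁ ψ₂ hψ₁ hψ₂ hWron ψ hψ
end
end

section
/- Let r, n : ℝ² → ℝ³ and w¹, w² : ℝ² → ℝ be smooth with |n| = 1 everywhere, satisfying the Weingarten equations ∂₁r = w¹ ∂₁n and ∂₂r = w² ∂₂n, and with w¹ ≠ w² at every point. Define the ℝ⁶-valued maps U = ((1+|r|²−2w¹⟨r,n⟩)/2, (1−|r|²+2w¹⟨r,n⟩)/2, r − w¹n, w¹) and V = ((1+|r|²−2w²⟨r,n⟩)/2, (1−|r|²+2w²⟨r,n⟩)/2, r − w²n, w²). Then ∂₁U = (∂₁w¹/(w¹−w²))·(U − V) and ∂₂V = (∂₂w²/(w²−w¹))·(V − U) at every point. -/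
open Complex ComplexConjugate

noncomputable section

private lemma cons_val_five {α : Type*} (a0 a1 a2 a3 a4 a5 : α) :
    (![a0, a1, a2, a3, a4, a5] : Fin 6 → α) 5 = a5 := rfl

private lemma core_hasDerivAt (f g : ℝ → Fin 3 → ℝ) (a : ℝ → ℝ) (x : ℝ)
    (Df Dg : Fin 3 → ℝ) (Da : ℝ)
    (hf : ∀ i, HasDerivAt (fun t => f t i) (Df i) x)
    (hg : ∀ i, HasDerivAt (fun t => g t i) (Dg i) x)
    (ha : HasDerivAt a Da x)
    (hW : ∀ i, Df i = a x * Dg i)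
    (ho : g x 0 * Dg 0 + g x 1 * Dg 1 + g x 2 * Dg 2 = 0) :
    HasDerivAt (fun t => (![(1 + dot3 (f t) (f t) - 2 * a t * dot3 (f t) (g t)) / 2,
        (1 - dot3 (f t) (f t) + 2 * a t * dot3 (f t) (g t)) / 2,
        f t 0 - a t * g t 0, f t 1 - a t * g t 1, f t 2 - a t * g t 2,
        a t] : Fin 6 → ℝ))
      (![-(Da * dot3 (f x) (g x)), Da * dot3 (f x) (g x),
         -(Da * g x 0), -(Da * g x 1), -(Da * g x 2), Da]) x := by
  have hff : HasDerivAt (fun t => dot3 (f t) (f t))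
      (2 * a x * (f x 0 * Dg 0 + f x 1 * Dg 1 + f x 2 * Dg 2)) x := by
    have h := (((hf 0).mul (hf 0)).add ((hf 1).mul (hf 1))).add ((hf 2).mul (hf 2))
    unfold dot3
    exact h.congr_deriv (by rw [hW 0, hW 1, hW 2]; ring)
  have hfg : HasDerivAt (fun t => dot3 (f t) (g t))
      (f x 0 * Dg 0 + f x 1 * Dg 1 + f x 2 * Dg 2) x := by
    have h := (((hf 0).mul (hg 0)).add ((hf 1).mul (hg 1))).add ((hf 2).mul (hg 2))
    unfold dot3
    exact h.congr_deriv (by rw [hW 0, hW 1, hW 2]; linear_combination (a x) * ho)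
  apply hasDerivAt_pi.2
  intro i
  fin_cases i
  · show HasDerivAt (fun t => (1 + dot3 (f t) (f t) - 2 * a t * dot3 (f t) (g t)) / 2)
      (-(Da * dot3 (f x) (g x))) x
    have h := (((hasDerivAt_const x (1:ℝ)).add hff).sub ((ha.const_mul 2).mul hfg)).div_const 2
    exact h.congr_deriv (by ring)
  · show HasDerivAt (fun t => (1 - dot3 (f t) (f t) + 2 * a t * dot3 (f t) (g t)) / 2)
      (Da * dot3 (f x) (g x)) x
    have h := (((hasDerivAt_const x (1:ℝ)).sub hff).add ((ha.const_mul 2).mul hfg)).div_const 2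
    exact h.congr_deriv (by ring)
  · show HasDerivAt (fun t => f t 0 - a t * g t 0) (-(Da * g x 0)) x
    have h := (hf 0).sub (ha.mul (hg 0))
    exact h.congr_deriv (by rw [hW 0]; ring)
  · show HasDerivAt (fun t => f t 1 - a t * g t 1) (-(Da * g x 1)) x
    have h := (hf 1).sub (ha.mul (hg 1))
    exact h.congr_deriv (by rw [hW 1]; ring)
  · show HasDerivAt (fun t => f t 2 - a t * g t 2) (-(Da * g x 2)) x
    have h := (hf 2).sub (ha.mul (hg 2))
    exact h.congr_deriv (by rw [hW 2]; ring)
  · show HasDerivAt (fun t => a t) Da x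
    exact ha

/-- for a surface in curvature line coordinates, the hexaspherical
curvature-sphere maps satisfy `∂₁U = (∂₁w¹/(w¹−w²))(U−V)` and
`∂₂V = (∂₂w²/(w²−w¹))(V−U)`. -/
theorem statement_19
    (r n : ℝ → ℝ → Fin 3 → ℝ) (w₁ w₂ : ℝ → ℝ → ℝ)
    (hr : ContDiff ℝ (⊤ : ℕ∞) (fun z : ℝ × ℝ => r z.1 z.2))
    (hn : ContDiff ℝ (⊤ : ℕ∞) (fun z : ℝ × ℝ => n z.1 z.2))
    (hw₁ : ContDiff ℝ (⊤ : ℕ∞) (fun z : ℝ × ℝ => w₁ z.1 z.2))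
    (hw₂ : ContDiff ℝ (⊤ : ℕ∞) (fun z : ℝ × ℝ => w₂ z.1 z.2))
    (hunit : ∀ x y, dot3 (n x y) (n x y) = 1)
    (hWein1 : ∀ x y, pd1 r x y = w₁ x y • pd1 n x y)
    (hWein2 : ∀ x y, pd2 r x y = w₂ x y • pd2 n x y)
    (hne : ∀ x y, w₁ x y ≠ w₂ x y)
    (U V : ℝ → ℝ → Fin 6 → ℝ)
    (hU : ∀ x y, U x y
        = ![(1 + dot3 (r x y) (r x y) - 2 * w₁ x y * dot3 (r x y) (n x y)) / 2,
            (1 - dot3 (r x y) (r x y) + 2 * w₁ x y * dot3 (r x y) (n x y)) / 2,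
            r x y 0 - w₁ x y * n x y 0, r x y 1 - w₁ x y * n x y 1,
            r x y 2 - w₁ x y * n x y 2, w₁ x y])
    (hV : ∀ x y, V x y
        = ![(1 + dot3 (r x y) (r x y) - 2 * w₂ x y * dot3 (r x y) (n x y)) / 2,
            (1 - dot3 (r x y) (r x y) + 2 * w₂ x y * dot3 (r x y) (n x y)) / 2,
            r x y 0 - w₂ x y * n x y 0, r x y 1 - w₂ x y * n x y 1,
            r x y 2 - w₂ x y * n x y 2, w₂ x y]) :
    ∀ x y, pd1 U x y = (pd1 w₁ x y / (w₁ x y - w₂ x y)) • (U x y - V x y) ∧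
      pd2 V x y = (pd2 w₂ x y / (w₂ x y - w₁ x y)) • (V x y - U x y) := by
  intro x y
  have hne1 : w₁ x y - w₂ x y ≠ 0 := sub_ne_zero.mpr (hne x y)
  have hne2 : w₂ x y - w₁ x y ≠ 0 := sub_ne_zero.mpr (Ne.symm (hne x y))
  have hc1 : ∀ y : ℝ, ContDiff ℝ (⊤ : ℕ∞) (fun t : ℝ => (t, y)) :=
    fun y => ContDiff.prodMk contDiff_id contDiff_const
  have hc2 : ∀ x : ℝ, ContDiff ℝ (⊤ : ℕ∞) (fun t : ℝ => (x, t)) :=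
    fun x => ContDiff.prodMk contDiff_const contDiff_id
  -- derivative facts in direction 1
  have hrd1 : HasDerivAt (fun t => r t y) (pd1 r x y) x :=
    (((hr.comp (hc1 y)).differentiable (by simp)) x).hasDerivAt
  have hnd1 : HasDerivAt (fun t => n t y) (pd1 n x y) x :=
    (((hn.comp (hc1 y)).differentiable (by simp)) x).hasDerivAt
  have hw1d : HasDerivAt (fun t => w₁ t y) (pd1 w₁ x y) x :=
    (((hw₁.comp (hc1 y)).differentiable (by simp)) x).hasDerivAt
  -- derivative facts in direction 2
  have hrd2 : HasDerivAt (fun t => r x t) (pd2 r x y) y :=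
    (((hr.comp (hc2 x)).differentiable (by simp)) y).hasDerivAt
  have hnd2 : HasDerivAt (fun t => n x t) (pd2 n x y) y :=
    (((hn.comp (hc2 x)).differentiable (by simp)) y).hasDerivAt
  have hw2d : HasDerivAt (fun t => w₂ x t) (pd2 w₂ x y) y :=
    (((hw₂.comp (hc2 x)).differentiable (by simp)) y).hasDerivAt
  have hf1 : ∀ i, HasDerivAt (fun t => r t y i) (pd1 r x y i) x := hasDerivAt_pi.1 hrd1
  have hg1 : ∀ i, HasDerivAt (fun t => n t y i) (pd1 n x y i) x := hasDerivAt_pi.1 hnd1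
  have hf2 : ∀ i, HasDerivAt (fun t => r x t i) (pd2 r x y i) y := hasDerivAt_pi.1 hrd2
  have hg2 : ∀ i, HasDerivAt (fun t => n x t i) (pd2 n x y i) y := hasDerivAt_pi.1 hnd2
  have hW1 : ∀ i, pd1 r x y i = w₁ x y * pd1 n x y i := by
    intro i
    have := congrFun (hWein1 x y) i
    simpa using this
  have hW2 : ∀ i, pd2 r x y i = w₂ x y * pd2 n x y i := by
    intro i
    have := congrFun (hWein2 x y) i
    simpa using this
  -- orthogonality in both directions
  have ho1 : n x y 0 * pd1 n x y 0 + n x y 1 * pd1 n x y 1 + n x y 2 * pd1 n x y 2 = 0 := by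
    have hone : HasDerivAt (fun t => dot3 (n t y) (n t y)) 0 x := by
      have he : (fun t => dot3 (n t y) (n t y)) = fun _ => (1:ℝ) := funext fun t => hunit t y
      rw [he]; exact hasDerivAt_const x 1
    have hsum := (((hg1 0).mul (hg1 0)).add ((hg1 1).mul (hg1 1))).add ((hg1 2).mul (hg1 2))
    unfold dot3 at hone
    have := hsum.unique hone
    linarith
  have ho2 : n x y 0 * pd2 n x y 0 + n x y 1 * pd2 n x y 1 + n x y 2 * pd2 n x y 2 = 0 := by
    have hone : HasDerivAt (fun t => dot3 (n x t) (n x t)) 0 y := by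
      have he : (fun t => dot3 (n x t) (n x t)) = fun _ => (1:ℝ) := funext fun t => hunit x t
      rw [he]; exact hasDerivAt_const y 1
    have hsum := (((hg2 0).mul (hg2 0)).add ((hg2 1).mul (hg2 1))).add ((hg2 2).mul (hg2 2))
    unfold dot3 at hone
    have := hsum.unique hone
    linarith
  constructor
  · -- direction 1
    have hmain : HasDerivAt (fun t => U t y)
        (![-(pd1 w₁ x y * dot3 (r x y) (n x y)), pd1 w₁ x y * dot3 (r x y) (n x y),
           -(pd1 w₁ x y * n x y 0), -(pd1 w₁ x y * n x y 1), -(pd1 w₁ x y * n x y 2),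
           pd1 w₁ x y]) x := by
      have hUe : (fun t => U t y) = fun t =>
          (![(1 + dot3 (r t y) (r t y) - 2 * w₁ t y * dot3 (r t y) (n t y)) / 2,
            (1 - dot3 (r t y) (r t y) + 2 * w₁ t y * dot3 (r t y) (n t y)) / 2,
            r t y 0 - w₁ t y * n t y 0, r t y 1 - w₁ t y * n t y 1,
            r t y 2 - w₁ t y * n t y 2, w₁ t y] : Fin 6 → ℝ) := funext fun t => hU t y
      rw [hUe]
      exact core_hasDerivAt (fun t => r t y) (fun t => n t y) (fun t => w₁ t y) x
        (pd1 r x y) (pd1 n x y) (pd1 w₁ x y) hf1 hg1 hw1d hW1 ho1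
    have hderiv : pd1 U x y = _ := hmain.deriv
    rw [hderiv]
    funext i
    fin_cases i <;>
      simp [hU, hV, Matrix.cons_val_succ, cons_val_five, Pi.smul_apply, Pi.sub_apply, smul_eq_mul] <;>
      (try field_simp) <;> (try ring)
  · -- direction 2
    have hmain : HasDerivAt (fun t => V x t)
        (![-(pd2 w₂ x y * dot3 (r x y) (n x y)), pd2 w₂ x y * dot3 (r x y) (n x y),
           -(pd2 w₂ x y * n x y 0), -(pd2 w₂ x y * n x y 1), -(pd2 w₂ x y * n x y 2),
           pd2 w₂ x y]) y := by
      have hVe : (fun t => V x t) = fun t =>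
          (![(1 + dot3 (r x t) (r x t) - 2 * w₂ x t * dot3 (r x t) (n x t)) / 2,
            (1 - dot3 (r x t) (r x t) + 2 * w₂ x t * dot3 (r x t) (n x t)) / 2,
            r x t 0 - w₂ x t * n x t 0, r x t 1 - w₂ x t * n x t 1,
            r x t 2 - w₂ x t * n x t 2, w₂ x t] : Fin 6 → ℝ) := funext fun t => hV x t
      rw [hVe]
      exact core_hasDerivAt (fun t => r x t) (fun t => n x t) (fun t => w₂ x t) y
        (pd2 r x y) (pd2 n x y) (pd2 w₂ x y) hf2 hg2 hw2d hW2 ho2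
    have hderiv : pd2 V x y = _ := hmain.deriv
    rw [hderiv]
    funext i
    fin_cases i <;>
      simp [hU, hV, Matrix.cons_val_succ, cons_val_five, Pi.smul_apply, Pi.sub_apply, smul_eq_mul] <;>
      (try field_simp) <;> (try ring)
end
end
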